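/- arXiv:1607.08700 — 2 statements merged into one kernel-verified Lean document; each statement's English description precedes it below -/
import Mathlib

section
/- The bound |γ₂| ≤ 1/2 on the class ℱ is sharp: the function f analytic on 𝔻 determined by f(0) = 0 and z f'(z) = g(z)·P(z), where g(z) = z/(1 − z²) and P(z) = (1 + z²)/(1 − z²), belongs to ℱ and satisfies |γ₂| = 1/2. -/
open Complex Metric
open scoped Topology

/-- The `n`-th logarithmic coefficient `γₙ` of `f`, computed from an analytic branch `h`
of `log (f z / z)` with `h 0 = 0`: it is half the `n`-th Taylor coefficient of `h` at `0`. -/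
noncomputable def logCoeff (h : ℂ → ℂ) (n : ℕ) : ℂ :=
  iteratedDeriv n h 0 / (2 * (n.factorial : ℂ))

/-- `g` is an odd starlike function on the unit disk. -/
def IsOddStarlike (g : ℂ → ℂ) : Prop :=
  AnalyticOnNhd ℂ g (ball (0:ℂ) 1) ∧ g 0 = 0 ∧ deriv g 0 = 1 ∧
    (∀ z ∈ ball (0:ℂ) 1, z ≠ 0 → 0 < (z * deriv g z / g z).re) ∧
    (∀ z ∈ ball (0:ℂ) 1, g (-z) = -g z)

/-- `f` belongs to the class ℱ of close-to-convex functions with argument `0`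
with respect to odd starlike functions. -/
def MemClassF (f : ℂ → ℂ) : Prop :=
  AnalyticOnNhd ℂ f (ball (0:ℂ) 1) ∧ f 0 = 0 ∧ deriv f 0 = 1 ∧
    ∃ g : ℂ → ℂ, IsOddStarlike g ∧
      ∀ z ∈ ball (0:ℂ) 1, z ≠ 0 → 0 < (z * deriv f z / g z).re

/-- `h` is an analytic branch of `log (f z / z)` on the unit disk with `h 0 = 0`. -/
def IsLogBranch (f h : ℂ → ℂ) : Prop :=
  AnalyticOnNhd ℂ h (ball (0:ℂ) 1) ∧ h 0 = 0 ∧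
    ∀ z ∈ ball (0:ℂ) 1, z ≠ 0 → Complex.exp (h z) = f z / z

/-! The extremal function is the odd Koebe function `k z = z / (1 - z²)`: it is odd starlike since
`z k'(z) / k(z) = (1 + z²) / (1 - z²)` maps the disk into the right half-plane, so `k ∈ ℱ` with
`g = k`, and the differential equation forces `f = k`. Then `e^h = k z / z = (1 - z²)⁻¹`, so
`h' = 2z / (1 - z²)`, `h''(0) = 2` and `γ₂ = 1/2`. -/

lemma one_sub_ne_zero_of_norm_lt_one {w : ℂ} (hw : ‖w‖ < 1) : 1 - w ≠ 0 := by
  rw [sub_ne_zero]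
  rintro rfl
  simp at hw

lemma sq_mem_ball_zero_one {z : ℂ} (hz : z ∈ ball (0 : ℂ) 1) : z ^ 2 ∈ ball (0 : ℂ) 1 := by
  rw [mem_ball_zero_iff, norm_pow] at *
  exact pow_lt_one₀ (norm_nonneg z) hz two_ne_zero

lemma one_sub_sq_ne_zero {z : ℂ} (hz : z ∈ ball (0 : ℂ) 1) : 1 - z ^ 2 ≠ 0 :=
  one_sub_ne_zero_of_norm_lt_one (mem_ball_zero_iff.mp (sq_mem_ball_zero_one hz))

lemma re_one_add_div_one_sub_pos {w : ℂ} (hw : ‖w‖ < 1) : 0 < ((1 + w) / (1 - w)).re := by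
  have hsq : w.re * w.re + w.im * w.im < 1 := by
    rw [← normSq_apply, ← Complex.sq_norm]
    nlinarith [norm_nonneg w]
  rw [div_re, ← add_div]
  refine div_pos ?_ (normSq_pos.mpr (one_sub_ne_zero_of_norm_lt_one hw))
  simp only [add_re, sub_re, one_re, add_im, sub_im, one_im]
  nlinarith

lemma IsOddStarlike.memClassF {g : ℂ → ℂ} (hg : IsOddStarlike g) : MemClassF g :=
  ⟨hg.1, hg.2.1, hg.2.2.1, g, hg, hg.2.2.2.1⟩

lemma MemClassF.congr {f f' : ℂ → ℂ} (hf : MemClassF f) (hff' : Set.EqOn f f' (ball 0 1)) :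
    MemClassF f' := by
  obtain ⟨han, h0, hd0, g, hg, hre⟩ := hf
  have hderiv : ∀ z ∈ ball (0 : ℂ) 1, deriv f' z = deriv f z := fun z hz =>
    Filter.EventuallyEq.deriv_eq <|
      Filter.eventuallyEq_of_mem (isOpen_ball.mem_nhds hz) fun w hw => (hff' hw).symm
  have h0mem : (0 : ℂ) ∈ ball (0 : ℂ) 1 := mem_ball_self one_pos
  refine ⟨han.congr isOpen_ball hff', hff' h0mem ▸ h0, hderiv 0 h0mem ▸ hd0, g, hg, ?_⟩
  intro z hz hz0
  rw [hderiv z hz]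
  exact hre z hz hz0

lemma IsLogBranch.congr {f f' h : ℂ → ℂ} (hh : IsLogBranch f h)
    (hff' : Set.EqOn f f' (ball 0 1)) : IsLogBranch f' h :=
  ⟨hh.1, hh.2.1, fun z hz hz0 => hff' hz ▸ hh.2.2 z hz hz0⟩

lemma deriv_eq_div_of_exp_eventuallyEq {h ψ : ℂ → ℂ} {z ψ' : ℂ} (hh : DifferentiableAt ℂ h z)
    (hψ : HasDerivAt ψ ψ' z) (he : (fun w => exp (h w)) =ᶠ[𝓝 z] ψ) :
    deriv h z = ψ' / ψ z := by
  have hexp : HasDerivAt ψ (exp (h z) * deriv h z) z :=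
    hh.hasDerivAt.cexp.congr_of_eventuallyEq he.symm
  have hval : ψ z = exp (h z) := he.eq_of_nhds.symm
  rw [hψ.unique hexp, hval, mul_div_cancel_left₀ _ (exp_ne_zero _)]

noncomputable def oddKoebe (z : ℂ) : ℂ := z / (1 - z ^ 2)

lemma hasDerivAt_oddKoebe {z : ℂ} (hz : 1 - z ^ 2 ≠ 0) :
    HasDerivAt oddKoebe ((1 + z ^ 2) / (1 - z ^ 2) ^ 2) z := by
  have hden : HasDerivAt (fun w : ℂ => 1 - w ^ 2) (-(2 * z)) z := by
    simpa using (hasDerivAt_pow 2 z).const_sub (1 : ℂ)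
  exact ((hasDerivAt_id' z).fun_div hden hz).congr_deriv (by ring)

lemma analyticOnNhd_oddKoebe : AnalyticOnNhd ℂ oddKoebe (ball 0 1) :=
  analyticOnNhd_id.div (analyticOnNhd_const.sub (analyticOnNhd_id.pow 2))
    fun _ hz => one_sub_sq_ne_zero hz

lemma isOddStarlike_oddKoebe : IsOddStarlike oddKoebe := by
  have h0mem : (0 : ℂ) ∈ ball (0 : ℂ) 1 := mem_ball_self one_pos
  refine ⟨analyticOnNhd_oddKoebe, by simp [oddKoebe], ?_, ?_, ?_⟩
  · rw [(hasDerivAt_oddKoebe (one_sub_sq_ne_zero h0mem)).deriv]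
    norm_num
  · intro z hz hz0
    have hden := one_sub_sq_ne_zero hz
    have hquot : z * deriv oddKoebe z / oddKoebe z = (1 + z ^ 2) / (1 - z ^ 2) := by
      rw [(hasDerivAt_oddKoebe hden).deriv, oddKoebe]
      field_simp
    rw [hquot]
    exact re_one_add_div_one_sub_pos (mem_ball_zero_iff.mp (sq_mem_ball_zero_one hz))
  · intro z _
    simp only [oddKoebe, neg_sq, neg_div]

lemma eqOn_oddKoebe_of_mul_deriv_eq {f : ℂ → ℂ} (hf : AnalyticOnNhd ℂ f (ball 0 1))
    (hf0 : f 0 = 0)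
    (hode : ∀ z ∈ ball (0 : ℂ) 1,
      z * deriv f z = (z / (1 - z ^ 2)) * ((1 + z ^ 2) / (1 - z ^ 2))) :
    Set.EqOn f oddKoebe (ball 0 1) := by
  have h0mem : (0 : ℂ) ∈ ball (0 : ℂ) 1 := mem_ball_self one_pos
  have hderiv_punctured : ∀ᶠ z in 𝓝[≠] (0 : ℂ), deriv f z = deriv oddKoebe z := by
    filter_upwards [nhdsWithin_le_nhds (isOpen_ball.mem_nhds h0mem), self_mem_nhdsWithin]
      with z hz hz0
    have hden := one_sub_sq_ne_zero hz
    refine mul_left_cancel₀ (Set.mem_compl_singleton_iff.mp hz0) ?_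
    rw [hode z hz, (hasDerivAt_oddKoebe hden).deriv]
    field_simp
  -- the ODE only pins `f'` off the origin; analyticity extends the equality to all of the disk
  have hderiv : Set.EqOn (deriv f) (deriv oddKoebe) (ball 0 1) :=
    hf.deriv.eqOn_of_preconnected_of_frequently_eq analyticOnNhd_oddKoebe.deriv
      (convex_ball 0 1).isPreconnected h0mem hderiv_punctured.frequently
  refine (convex_ball (0 : ℂ) 1).eqOn_of_fderivWithin_eq
    (fun z hz => (hf z hz).differentiableAt.differentiableWithinAt)
    (fun z hz => (analyticOnNhd_oddKoebe z hz).differentiableAt.differentiableWithinAt)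
    isOpen_ball.uniqueDiffOn (fun z hz => ?_) h0mem (by simp [hf0, oddKoebe])
  rw [fderivWithin_of_isOpen isOpen_ball hz, fderivWithin_of_isOpen isOpen_ball hz,
    ← toSpanSingleton_deriv, ← toSpanSingleton_deriv, hderiv hz]

lemma hasDerivAt_inv_one_sub_sq {z : ℂ} (hz : 1 - z ^ 2 ≠ 0) :
    HasDerivAt (fun w : ℂ => (1 - w ^ 2)⁻¹) (2 * z / (1 - z ^ 2) ^ 2) z := by
  have hden : HasDerivAt (fun w : ℂ => 1 - w ^ 2) (-(2 * z)) z := by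
    simpa using (hasDerivAt_pow 2 z).const_sub (1 : ℂ)
  exact (hden.fun_inv hz).congr_deriv (by ring)

lemma IsLogBranch.deriv_eq_of_oddKoebe {h : ℂ → ℂ} (hh : IsLogBranch oddKoebe h) {z : ℂ}
    (hz : z ∈ ball (0 : ℂ) 1) : deriv h z = 2 * z / (1 - z ^ 2) := by
  obtain ⟨han, h0, hexp⟩ := hh
  have hexp' : (fun w => exp (h w)) =ᶠ[𝓝 z] fun w => (1 - w ^ 2)⁻¹ := by
    filter_upwards [isOpen_ball.mem_nhds hz] with w hw
    rcases eq_or_ne w 0 with rfl | hw0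
    · simp [h0]
    · rw [hexp w hw hw0, oddKoebe, div_div_cancel_left' hw0]
  have hden := one_sub_sq_ne_zero hz
  rw [deriv_eq_div_of_exp_eventuallyEq (han z hz).differentiableAt
    (hasDerivAt_inv_one_sub_sq hden) hexp']
  field_simp

lemma IsLogBranch.logCoeff_two_oddKoebe {h : ℂ → ℂ} (hh : IsLogBranch oddKoebe h) :
    logCoeff h 2 = 1 / 2 := by
  have h0mem : (0 : ℂ) ∈ ball (0 : ℂ) 1 := mem_ball_self one_pos
  have hderiv : deriv h =ᶠ[𝓝 0] fun z => 2 * z / (1 - z ^ 2) :=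
    Filter.eventuallyEq_of_mem (isOpen_ball.mem_nhds h0mem) fun _ hz =>
      hh.deriv_eq_of_oddKoebe hz
  have hsecond : deriv (fun z : ℂ => 2 * z / (1 - z ^ 2)) 0 = 2 := by
    have h2k := (hasDerivAt_oddKoebe (one_sub_sq_ne_zero h0mem)).const_mul (2 : ℂ)
    simp only [oddKoebe, ← mul_div_assoc] at h2k
    rw [h2k.deriv]
    norm_num
  rw [logCoeff, iteratedDeriv_succ, iteratedDeriv_one, hderiv.deriv_eq, hsecond]
  norm_num

/-- Sharpness of `|γ₂| ≤ 1/2` on ℱ: the function `f` with `f 0 = 0` and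
`z f'(z) = (z/(1-z²)) · ((1+z²)/(1-z²))` belongs to ℱ and satisfies `|γ₂| = 1/2`. -/
theorem abs_gamma_two_sharp (f : ℂ → ℂ)
    (hf : AnalyticOnNhd ℂ f (ball (0:ℂ) 1)) (hf0 : f 0 = 0)
    (hode : ∀ z ∈ ball (0:ℂ) 1,
      z * deriv f z = (z / (1 - z ^ 2)) * ((1 + z ^ 2) / (1 - z ^ 2))) :
    MemClassF f ∧ ∀ h : ℂ → ℂ, IsLogBranch f h → ‖logCoeff h 2‖ = 1 / 2 := by
  have hfk : Set.EqOn f oddKoebe (ball 0 1) := eqOn_oddKoebe_of_mul_deriv_eq hf hf0 hode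
  refine ⟨isOddStarlike_oddKoebe.memClassF.congr hfk.symm, fun h hh => ?_⟩
  rw [(hh.congr hfk).logCoeff_two_oddKoebe]
  norm_num
end

section
/- Let P be in the Carathéodory class 𝒫 with Taylor expansion P(z) = 1 + ∑_{n≥1} cₙ zⁿ, and suppose c₁ is real with 0 ≤ c₁ ≤ 2. Then there exist complex numbers x and t with |x| ≤ 1 and |t| ≤ 1 such that 2c₂ = c₁² + x(4 − c₁²) and 4c₃ = c₁³ + 2(4 − c₁²)c₁x − c₁(4 − c₁²)x² + 2(4 − c₁²)(1 − |x|²)t. -/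
/-!
With `ω = (P - 1) / (P + 1)` and `φ = ω / z` (a self-map of the closed unit disk by Schwarz's
lemma) we have `P = (1 + zφ) / (1 - zφ)`, so `c₁, c₂, c₃` are polynomials in the first three
Taylor coefficients of `φ`, and `c₁ = 2 φ(0)`. One step of the Schur algorithm,
`(φ - φ(0)) / (1 - conj φ(0) · φ) = z ψ`, expresses the next two coefficients of `φ` through
`ψ(0)` and `ψ'(0)` for another self-map `ψ` of the closed disk. Then `x = ψ(0)`, and the
Schwarz–Pick bound `|ψ'(0)| ≤ 1 - |ψ(0)|²` (itself a Schur step applied to `ψ`) provides `t`.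
Taylor coefficients of products are computed with the Leibniz rule.
-/

open Complex Metric

/-- The `n`-th Taylor coefficient of `P` at `0`. -/
noncomputable def taylorCoeff (P : ℂ → ℂ) (n : ℕ) : ℂ :=
  iteratedDeriv n P 0 / (n.factorial : ℂ)

/-- `P` belongs to the Carathéodory class 𝒫: analytic on the unit disk,
`P 0 = 1`, and `Re P > 0` on the disk. -/
def MemCaratheodory (P : ℂ → ℂ) : Prop :=
  AnalyticOnNhd ℂ P (ball (0:ℂ) 1) ∧ P 0 = 1 ∧ ∀ z ∈ ball (0:ℂ) 1, 0 < (P z).re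

open Set Filter Topology Finset ComplexConjugate

section TaylorCoeff

variable {f g : ℂ → ℂ}

theorem taylorCoeff_zero (f : ℂ → ℂ) : taylorCoeff f 0 = f 0 := by
  simp [taylorCoeff]

theorem Filter.EventuallyEq.taylorCoeff_eq (h : f =ᶠ[𝓝 0] g) (n : ℕ) :
    taylorCoeff f n = taylorCoeff g n := by
  rw [taylorCoeff, taylorCoeff, h.iteratedDeriv_eq]

theorem taylorCoeff_const_add {n : ℕ} (hn : n ≠ 0) (c : ℂ) (f : ℂ → ℂ) :
    taylorCoeff (fun z => c + f z) n = taylorCoeff f n := by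
  rw [taylorCoeff, taylorCoeff, iteratedDeriv_const_add (Nat.pos_of_ne_zero hn)]

theorem taylorCoeff_const_sub_mul {n : ℕ} (hn : n ≠ 0) (c d : ℂ) (f : ℂ → ℂ) :
    taylorCoeff (fun z => c - d * f z) n = -d * taylorCoeff f n := by
  rw [taylorCoeff, taylorCoeff, iteratedDeriv_const_sub (Nat.pos_of_ne_zero hn),
    iteratedDeriv_neg, iteratedDeriv_const_mul_field]
  ring

theorem taylorCoeff_const {n : ℕ} (hn : n ≠ 0) (c : ℂ) : taylorCoeff (fun _ => c) n = 0 := by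
  simp [taylorCoeff, iteratedDeriv_const, hn]

theorem taylorCoeff_mul (hf : AnalyticAt ℂ f 0) (hg : AnalyticAt ℂ g 0) (n : ℕ) :
    taylorCoeff (fun z => f z * g z) n =
      ∑ i ∈ range (n + 1), taylorCoeff f i * taylorCoeff g (n - i) := by
  simp only [taylorCoeff, iteratedDeriv_fun_mul hf.contDiffAt hg.contDiffAt, sum_div]
  refine sum_congr rfl fun i hi => ?_
  rw [Nat.cast_choose ℂ (by grind)]
  field_simp [Nat.factorial_ne_zero]

theorem taylorCoeff_id_mul (hg : AnalyticAt ℂ g 0) (n : ℕ) :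
    taylorCoeff (fun z => z * g z) (n + 1) = taylorCoeff g n := by
  rw [taylorCoeff_mul (f := fun z => z) analyticAt_id hg, sum_eq_single 1]
  · simp [taylorCoeff, iteratedDeriv_fun_id_zero]
  · intro i _ hi
    simp [taylorCoeff, iteratedDeriv_fun_id_zero, hi]
  · simp

theorem taylorCoeff_succ_of_eventually_eq_const_add_mul {u k : ℂ → ℂ} {c : ℂ}
    (hu : AnalyticAt ℂ u 0) (hk : AnalyticAt ℂ k 0)
    (h : ∀ᶠ z in 𝓝 0, f z = c + z * u z * k z) (n : ℕ) :
    taylorCoeff f (n + 1) = ∑ i ∈ range (n + 1), taylorCoeff u i * taylorCoeff k (n - i) := by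
  rw [Filter.EventuallyEq.taylorCoeff_eq h, taylorCoeff_const_add n.succ_ne_zero]
  simp_rw [mul_assoc]
  exact (taylorCoeff_id_mul (hu.mul hk) n).trans (taylorCoeff_mul hu hk n)

end TaylorCoeff

theorem normSq_add_one_sub_normSq_sub_one (w : ℂ) :
    normSq (w + 1) - normSq (w - 1) = 4 * w.re := by
  simp only [normSq_apply, add_re, add_im, sub_re, sub_im, one_re, one_im]
  ring

theorem norm_sub_one_div_add_one_lt_one {w : ℂ} (hw : 0 < w.re) : ‖(w - 1) / (w + 1)‖ < 1 := by
  have hlt : normSq (w - 1) < normSq (w + 1) := by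
    linarith [normSq_add_one_sub_normSq_sub_one w]
  rw [norm_div, div_lt_one (by simpa using (normSq_nonneg _).trans_lt hlt)]
  simpa [← Complex.sq_norm, sq_lt_sq₀] using hlt

theorem normSq_one_sub_conj_mul_sub_normSq_sub (u w : ℂ) :
    normSq (1 - conj w * u) - normSq (u - w) = (1 - normSq u) * (1 - normSq w) := by
  simp only [normSq_apply, sub_re, sub_im, mul_re, mul_im, conj_re, conj_im, one_re, one_im]
  ring

section Mobius

variable {u w : ℂ}

theorem normSq_sub_lt_normSq_one_sub_conj_mul (hu : ‖u‖ < 1) (hw : ‖w‖ < 1) :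
    normSq (u - w) < normSq (1 - conj w * u) := by
  have hu' : normSq u < 1 := by simpa [← Complex.sq_norm] using hu
  have hw' : normSq w < 1 := by simpa [← Complex.sq_norm] using hw
  nlinarith [normSq_one_sub_conj_mul_sub_normSq_sub u w]

theorem one_sub_conj_mul_ne_zero (hu : ‖u‖ < 1) (hw : ‖w‖ < 1) : 1 - conj w * u ≠ 0 := by
  simpa using (normSq_nonneg _).trans_lt (normSq_sub_lt_normSq_one_sub_conj_mul hu hw)

theorem norm_sub_div_one_sub_conj_mul_lt_one (hu : ‖u‖ < 1) (hw : ‖w‖ < 1) :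
    ‖(u - w) / (1 - conj w * u)‖ < 1 := by
  rw [norm_div, div_lt_one (norm_pos_iff.2 (one_sub_conj_mul_ne_zero hu hw))]
  simpa [← Complex.sq_norm, sq_lt_sq₀] using normSq_sub_lt_normSq_one_sub_conj_mul hu hw

end Mobius

section UnitDisk

variable {f : ℂ → ℂ}

theorem eqOn_const_of_norm_eq_one (hd : DifferentiableOn ℂ f (ball 0 1))
    (hf : MapsTo f (ball 0 1) (closedBall 0 1)) {z₀ : ℂ} (hz₀ : z₀ ∈ ball (0 : ℂ) 1)
    (h : ‖f z₀‖ = 1) : EqOn f (Function.const ℂ (f z₀)) (ball 0 1) :=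
  eqOn_of_isPreconnected_of_isMaxOn_norm (convex_ball 0 1).isPreconnected isOpen_ball hd hz₀
    fun z hz => by simpa [h] using hf hz

theorem mapsTo_ball_of_norm_lt_one (hd : DifferentiableOn ℂ f (ball 0 1))
    (hf : MapsTo f (ball 0 1) (closedBall 0 1)) (h0 : ‖f 0‖ < 1) :
    MapsTo f (ball 0 1) (ball 0 1) := by
  intro z hz
  rw [mem_ball_zero_iff]
  refine (mem_closedBall_zero_iff.1 (hf hz)).lt_of_ne fun h => h0.ne ?_
  rw [eqOn_const_of_norm_eq_one hd hf hz h (mem_ball_self one_pos), Function.const_apply, h]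

theorem mapsTo_dslope_zero_closedBall (hd : DifferentiableOn ℂ f (ball 0 1))
    (hf : MapsTo f (ball 0 1) (ball 0 1)) (h0 : f 0 = 0) :
    MapsTo (dslope f 0) (ball 0 1) (closedBall 0 1) := fun z hz => by
  simpa using norm_dslope_le_div_of_mapsTo_ball hd
    (by simpa [h0] using hf.mono_right ball_subset_closedBall) hz

theorem exists_schur_step_of_mapsTo_ball (hd : DifferentiableOn ℂ f (ball 0 1))
    (hf : MapsTo f (ball 0 1) (ball 0 1)) :
    ∃ g : ℂ → ℂ, DifferentiableOn ℂ g (ball 0 1) ∧ MapsTo g (ball 0 1) (closedBall 0 1) ∧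
      taylorCoeff f 1 = (1 - (‖f 0‖ : ℂ) ^ 2) * g 0 ∧
      taylorCoeff f 2 = (1 - (‖f 0‖ : ℂ) ^ 2) * (taylorCoeff g 1 - conj (f 0) * g 0 ^ 2) := by
  have h0D : (0 : ℂ) ∈ ball (0 : ℂ) 1 := mem_ball_self one_pos
  have hnhds : ball (0 : ℂ) 1 ∈ 𝓝 0 := isOpen_ball.mem_nhds h0D
  set a := f 0
  have hnorm : ∀ z ∈ ball (0 : ℂ) 1, ‖f z‖ < 1 := fun z hz => mem_ball_zero_iff.1 (hf hz)
  have hden : ∀ z ∈ ball (0 : ℂ) 1, 1 - conj a * f z ≠ 0 := fun z hz =>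
    one_sub_conj_mul_ne_zero (hnorm z hz) (hnorm 0 h0D)
  set h : ℂ → ℂ := fun z => (f z - a) / (1 - conj a * f z)
  have hhd : DifferentiableOn ℂ h (ball 0 1) :=
    (hd.sub_const a).div ((differentiableOn_const 1).sub (hd.const_mul _)) hden
  have hhD : MapsTo h (ball 0 1) (ball 0 1) := fun z hz =>
    mem_ball_zero_iff.2 (norm_sub_div_one_sub_conj_mul_lt_one (hnorm z hz) (hnorm 0 h0D))
  have hh0 : h 0 = 0 := by simp [h, a]
  have hgd : DifferentiableOn ℂ (dslope h 0) (ball 0 1) := (differentiableOn_dslope hnhds).2 hhd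
  refine ⟨dslope h 0, hgd, mapsTo_dslope_zero_closedBall hhd hhD hh0, ?_⟩
  have hrepr : ∀ᶠ z in 𝓝 0, f z = a + z * dslope h 0 z * (1 - conj a * f z) := by
    filter_upwards [hnhds] with z hz
    have hz' : z * dslope h 0 z = h z := by simpa [hh0] using sub_smul_dslope h 0 z
    rw [hz', div_mul_cancel₀ _ (hden z hz)]
    ring
  have hcoeff := taylorCoeff_succ_of_eventually_eq_const_add_mul (k := fun z => 1 - conj a * f z)
    (hgd.analyticAt hnhds) (analyticAt_const.sub (analyticAt_const.mul (hd.analyticAt hnhds))) hrepr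
  have hk0 : taylorCoeff (fun z => 1 - conj a * f z) 0 = 1 - (‖a‖ : ℂ) ^ 2 := by
    rw [taylorCoeff_zero, conj_mul']
  have hk1 : taylorCoeff (fun z => 1 - conj a * f z) 1 = -conj a * taylorCoeff f 1 :=
    taylorCoeff_const_sub_mul one_ne_zero _ _ _
  have h1 : taylorCoeff f 1 = _ := hcoeff 0
  have h2 : taylorCoeff f 2 = _ := hcoeff 1
  simp only [sum_range_succ, sum_range_zero, zero_add, Nat.sub_self, Nat.sub_zero, hk0, hk1,
    taylorCoeff_zero (dslope h 0)] at h1 h2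
  constructor
  · linear_combination h1
  · linear_combination h2 - conj a * dslope h 0 0 * h1

theorem exists_schur_step (hd : DifferentiableOn ℂ f (ball 0 1))
    (hf : MapsTo f (ball 0 1) (closedBall 0 1)) :
    ∃ g : ℂ → ℂ, DifferentiableOn ℂ g (ball 0 1) ∧ MapsTo g (ball 0 1) (closedBall 0 1) ∧
      taylorCoeff f 1 = (1 - (‖f 0‖ : ℂ) ^ 2) * g 0 ∧
      taylorCoeff f 2 = (1 - (‖f 0‖ : ℂ) ^ 2) * (taylorCoeff g 1 - conj (f 0) * g 0 ^ 2) := by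
  have h0D : (0 : ℂ) ∈ ball (0 : ℂ) 1 := mem_ball_self one_pos
  rcases (mem_closedBall_zero_iff.1 (hf h0D)).eq_or_lt with h1 | hlt
  · have hcoeff : ∀ n ≠ 0, taylorCoeff f n = 0 := fun n hn =>
      (((eqOn_const_of_norm_eq_one hd hf h0D h1).eventuallyEq_of_mem
        (isOpen_ball.mem_nhds h0D)).taylorCoeff_eq n).trans (taylorCoeff_const hn _)
    exact ⟨0, differentiableOn_const 0, fun _ _ => by simp, by simp [hcoeff, h1],
      by simp [hcoeff, h1]⟩
  · exact exists_schur_step_of_mapsTo_ball hd (mapsTo_ball_of_norm_lt_one hd hf hlt)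

theorem norm_taylorCoeff_one_le (hd : DifferentiableOn ℂ f (ball 0 1))
    (hf : MapsTo f (ball 0 1) (closedBall 0 1)) : ‖taylorCoeff f 1‖ ≤ 1 - ‖f 0‖ ^ 2 := by
  obtain ⟨g, -, hg, h1, -⟩ := exists_schur_step hd hf
  have hg0 : ‖g 0‖ ≤ 1 := mem_closedBall_zero_iff.1 (hg (mem_ball_self one_pos))
  have hf0 : 0 ≤ 1 - ‖f 0‖ ^ 2 := by
    have := mem_closedBall_zero_iff.1 (hf (mem_ball_self one_pos))
    nlinarith [norm_nonneg (f 0)]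
  have hcast : (1 - (‖f 0‖ : ℂ) ^ 2) = ((1 - ‖f 0‖ ^ 2 : ℝ) : ℂ) := by push_cast; ring
  rw [h1, norm_mul, hcast, Complex.norm_of_nonneg hf0]
  exact mul_le_of_le_one_right hf0 hg0

end UnitDisk

theorem MemCaratheodory.exists_schur_function {P : ℂ → ℂ} (hP : MemCaratheodory P) :
    ∃ φ : ℂ → ℂ, DifferentiableOn ℂ φ (ball 0 1) ∧ MapsTo φ (ball 0 1) (closedBall 0 1) ∧
      taylorCoeff P 1 = 2 * φ 0 ∧
      taylorCoeff P 2 = 2 * (taylorCoeff φ 1 + φ 0 ^ 2) ∧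
      taylorCoeff P 3 = 2 * (taylorCoeff φ 2 + 2 * φ 0 * taylorCoeff φ 1 + φ 0 ^ 3) := by
  obtain ⟨hPa, hP0, hPre⟩ := hP
  have hnhds : ball (0 : ℂ) 1 ∈ 𝓝 0 := isOpen_ball.mem_nhds (mem_ball_self one_pos)
  have hden : ∀ z ∈ ball (0 : ℂ) 1, P z + 1 ≠ 0 := fun z hz h => by
    have := congrArg re h
    simp only [add_re, one_re, zero_re] at this
    linarith [hPre z hz]
  set ω : ℂ → ℂ := fun z => (P z - 1) / (P z + 1)
  have hωd : DifferentiableOn ℂ ω (ball 0 1) :=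
    (hPa.differentiableOn.sub_const 1).div (hPa.differentiableOn.add_const 1) hden
  have hωD : MapsTo ω (ball 0 1) (ball 0 1) := fun z hz =>
    mem_ball_zero_iff.2 (norm_sub_one_div_add_one_lt_one (hPre z hz))
  have hω0 : ω 0 = 0 := by simp [ω, hP0]
  have hφd : DifferentiableOn ℂ (dslope ω 0) (ball 0 1) := (differentiableOn_dslope hnhds).2 hωd
  refine ⟨dslope ω 0, hφd, mapsTo_dslope_zero_closedBall hωd hωD hω0, ?_⟩
  have hrepr : ∀ᶠ z in 𝓝 0, P z = 1 + z * dslope ω 0 z * (1 + P z) := by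
    filter_upwards [hnhds] with z hz
    have hz' : z * dslope ω 0 z = ω z := by simpa [hω0] using sub_smul_dslope ω 0 z
    rw [hz', add_comm 1 (P z), div_mul_cancel₀ _ (hden z hz)]
    ring
  have hcoeff := taylorCoeff_succ_of_eventually_eq_const_add_mul (k := fun z => 1 + P z)
    (hφd.analyticAt hnhds) (analyticAt_const.add (hPa 0 (mem_ball_self one_pos))) hrepr
  have hk : ∀ n ≠ 0, taylorCoeff (fun z => 1 + P z) n = taylorCoeff P n :=
    fun n hn => taylorCoeff_const_add hn _ _
  have h1 : taylorCoeff P 1 = _ := hcoeff 0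
  have h2 : taylorCoeff P 2 = _ := hcoeff 1
  have h3 : taylorCoeff P 3 = _ := hcoeff 2
  norm_num only [sum_range_succ, sum_range_zero, taylorCoeff_zero, hP0, hk] at h1 h2 h3
  refine ⟨by linear_combination h1, by linear_combination h2 + dslope ω 0 0 * h1, ?_⟩
  linear_combination h3 + dslope ω 0 0 * h2 + (dslope ω 0 0 ^ 2 + taylorCoeff (dslope ω 0) 1) * h1

theorem exists_norm_le_one_mul_eq {u : ℂ} {r : ℝ} (h : ‖u‖ ≤ r) :
    ∃ t : ℂ, ‖t‖ ≤ 1 ∧ u = r * t := by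
  rcases ((norm_nonneg u).trans h).eq_or_lt with hr | hr
  · exact ⟨0, by simp, by simpa [← hr] using h⟩
  · refine ⟨u / r, ?_, ?_⟩
    · rw [norm_div, norm_real, Real.norm_of_nonneg hr.le]
      exact div_le_one_of_le₀ h hr.le
    · rw [mul_div_cancel₀ _ (ofReal_ne_zero.2 hr.ne')]

theorem caratheodory_coeff_repr_general (P : ℂ → ℂ) (hP : MemCaratheodory P)
    (hc₁re : (taylorCoeff P 1).im = 0) :
    ∃ x t : ℂ, ‖x‖ ≤ 1 ∧ ‖t‖ ≤ 1 ∧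
      2 * taylorCoeff P 2 = (taylorCoeff P 1) ^ 2 + x * (4 - (taylorCoeff P 1) ^ 2) ∧
      4 * taylorCoeff P 3 = (taylorCoeff P 1) ^ 3
        + 2 * (4 - (taylorCoeff P 1) ^ 2) * (taylorCoeff P 1) * x
        - (taylorCoeff P 1) * (4 - (taylorCoeff P 1) ^ 2) * x ^ 2
        + 2 * (4 - (taylorCoeff P 1) ^ 2) * (1 - ((‖x‖ : ℝ) : ℂ) ^ 2) * t := by
  obtain ⟨φ, hφd, hφ, hc₁, hc₂, hc₃⟩ := hP.exists_schur_function
  obtain ⟨ψ, hψd, hψ, hφ₁, hφ₂⟩ := exists_schur_step hφd hφ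
  obtain ⟨t, ht, hψ₁⟩ := exists_norm_le_one_mul_eq (norm_taylorCoeff_one_le hψd hψ)
  have hreal : conj (φ 0) = φ 0 := conj_eq_iff_im.2 (by simpa [hc₁] using hc₁re)
  have hnorm : (‖φ 0‖ : ℂ) ^ 2 = φ 0 ^ 2 := by rw [← conj_mul', hreal, sq]
  refine ⟨ψ 0, t, mem_closedBall_zero_iff.1 (hψ (mem_ball_self one_pos)), ht, ?_, ?_⟩
  · rw [hc₂, hc₁, hφ₁, hnorm]
    ring
  · push_cast at hψ₁
    rw [hc₃, hc₁, hφ₂, hφ₁, hψ₁, hreal, hnorm]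
    ring

/-- Libera–Złotkiewicz: for `P ∈ 𝒫` with `c₁` real and `0 ≤ c₁ ≤ 2`, there exist
`x, t ∈ ℂ` with `|x| ≤ 1`, `|t| ≤ 1` such that `2c₂ = c₁² + x(4 − c₁²)` and
`4c₃ = c₁³ + 2(4 − c₁²)c₁x − c₁(4 − c₁²)x² + 2(4 − c₁²)(1 − |x|²)t`. -/
theorem caratheodory_coeff_repr (P : ℂ → ℂ) (hP : MemCaratheodory P)
    (hc₁re : (taylorCoeff P 1).im = 0) (hc₁0 : 0 ≤ (taylorCoeff P 1).re)
    (hc₁2 : (taylorCoeff P 1).re ≤ 2) :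
    ∃ x t : ℂ, ‖x‖ ≤ 1 ∧ ‖t‖ ≤ 1 ∧
      2 * taylorCoeff P 2 = (taylorCoeff P 1) ^ 2 + x * (4 - (taylorCoeff P 1) ^ 2) ∧
      4 * taylorCoeff P 3 = (taylorCoeff P 1) ^ 3
        + 2 * (4 - (taylorCoeff P 1) ^ 2) * (taylorCoeff P 1) * x
        - (taylorCoeff P 1) * (4 - (taylorCoeff P 1) ^ 2) * x ^ 2
        + 2 * (4 - (taylorCoeff P 1) ^ 2) * (1 - ((‖x‖ : ℝ) : ℂ) ^ 2) * t :=
  caratheodory_coeff_repr_general P hP hc₁re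
end
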